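/- For a delta-mixture training distribution, the proxy score covariance is, up to conjugation by S^{-1} and scaling by α², the posterior covariance of the training examples: for every x ∈ ℝ^D, C(x) = α² S^{-1} Cov_w(μ)(x) S^{-1}, where Cov_w(μ)(x) := Σ_m w_m(x) μ_m μ_mᵀ − (Σ_m w_m(x) μ_m)(Σ_m w_m(x) μ_m)ᵀ. -/

import Mathlib

open Matrix MeasureTheory BigOperators

/-- Partial derivative of a scalar function on `ℝ^D` in coordinate `i`. -/
noncomputable def pderiv' {D : ℕ} (i : Fin D) (f : (Fin D → ℝ) → ℝ) (x : Fin D → ℝ) : ℝ :=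
  deriv (fun t => f (Function.update x i t)) (x i)

/-- Multivariate Gaussian density `N(x; m, S)`. -/
noncomputable def gaussDensity {D : ℕ} (S : Matrix (Fin D) (Fin D) ℝ) (m x : Fin D → ℝ) : ℝ :=
  ((2 * Real.pi) ^ D * S.det) ^ (-(1/2) : ℝ) *
    Real.exp (-((x - m) ⬝ᵥ S⁻¹.mulVec (x - m)) / 2)

/-- Noise-corrupted marginal `p(x) = (1/M) ∑ₘ N(x; α μₘ, S)`. -/
noncomputable def marginal {D M : ℕ} (μ : Fin M → Fin D → ℝ) (α : ℝ)
    (S : Matrix (Fin D) (Fin D) ℝ) (x : Fin D → ℝ) : ℝ :=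
  (M : ℝ)⁻¹ * ∑ m, gaussDensity S (α • μ m) x

/-- The score `s(x) = ∇ₓ log p(x)`. -/
noncomputable def score {D M : ℕ} (μ : Fin M → Fin D → ℝ) (α : ℝ)
    (S : Matrix (Fin D) (Fin D) ℝ) (x : Fin D → ℝ) : Fin D → ℝ :=
  fun i => pderiv' i (fun y => Real.log (marginal μ α S y)) x

/-- The proxy score `s̃(x; x₀) = S⁻¹ (α x₀ − x)`. -/
noncomputable def proxyScore {D : ℕ} (α : ℝ) (S : Matrix (Fin D) (Fin D) ℝ)
    (x x₀ : Fin D → ℝ) : Fin D → ℝ :=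
  S⁻¹.mulVec (α • x₀ - x)

/-- Posterior weights `wₘ(x) = N(x; α μₘ, S) / ∑ₘ' N(x; α μₘ', S)`. -/
noncomputable def postW {D M : ℕ} (μ : Fin M → Fin D → ℝ) (α : ℝ)
    (S : Matrix (Fin D) (Fin D) ℝ) (m : Fin M) (x : Fin D → ℝ) : ℝ :=
  gaussDensity S (α • μ m) x / ∑ m', gaussDensity S (α • μ m') x


/-- Proxy score covariance `C(x) = ∑ₘ wₘ(x) s̃(x;μₘ) s̃(x;μₘ)ᵀ − s(x) s(x)ᵀ`. -/
noncomputable def proxyCov {D M : ℕ} (μ : Fin M → Fin D → ℝ) (α : ℝ)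
    (S : Matrix (Fin D) (Fin D) ℝ) (x : Fin D → ℝ) : Matrix (Fin D) (Fin D) ℝ :=
  Matrix.of fun i j =>
    (∑ m, postW μ α S m x * (proxyScore α S x (μ m) i * proxyScore α S x (μ m) j)) -
      score μ α S x i * score μ α S x j


/-- Posterior mean of the training examples, `∑ₘ wₘ(x) μₘ`. -/
noncomputable def postMean {D M : ℕ} (μ : Fin M → Fin D → ℝ) (α : ℝ)
    (S : Matrix (Fin D) (Fin D) ℝ) (x : Fin D → ℝ) : Fin D → ℝ :=
  ∑ m, postW μ α S m x • μ m

/-- Posterior covariance of the training examples,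
`Cov_w(μ)(x) = ∑ₘ wₘ(x) μₘ μₘᵀ − (∑ₘ wₘ(x) μₘ)(∑ₘ wₘ(x) μₘ)ᵀ`. -/
noncomputable def postCovMu {D M : ℕ} (μ : Fin M → Fin D → ℝ) (α : ℝ)
    (S : Matrix (Fin D) (Fin D) ℝ) (x : Fin D → ℝ) : Matrix (Fin D) (Fin D) ℝ :=
  (∑ m, postW μ α S m x • vecMulVec (μ m) (μ m)) -
    vecMulVec (postMean μ α S x) (postMean μ α S x)


/- ## Auxiliary lemmas -/

lemma update_sub_eq' {D : ℕ} (x m : Fin D → ℝ) (i : Fin D) (t : ℝ) :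
    Function.update x i t - m = (x - m) + (t - x i) • (Pi.single i 1 : Fin D → ℝ) := by
  funext j
  by_cases h : j = i
  · subst h; simp
  · simp [Function.update_of_ne h, Pi.single_apply, h]

lemma quad_eq' {D : ℕ} (A : Matrix (Fin D) (Fin D) ℝ) (x m : Fin D → ℝ) (i : Fin D) (t : ℝ) :
    (Function.update x i t - m) ⬝ᵥ A.mulVec (Function.update x i t - m)
      = ((x - m) ⬝ᵥ A.mulVec (x - m))
        + (t - x i) * ((A.mulVec (x - m)) i + (Aᵀ.mulVec (x - m)) i)
        + (t - x i) ^ 2 * ((Pi.single i 1 : Fin D → ℝ) ⬝ᵥ A.mulVec (Pi.single i 1)) := by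
  rw [update_sub_eq']
  set w := x - m
  set e : Fin D → ℝ := Pi.single i 1
  have he : ∀ v : Fin D → ℝ, e ⬝ᵥ v = v i := by
    intro v; simp [e, dotProduct, Pi.single_apply]
  have h2 : w ⬝ᵥ A.mulVec e = (Aᵀ.mulVec w) i := by
    simp [e, dotProduct, Matrix.mulVec, Pi.single_apply, Finset.mul_sum, mul_comm]
  rw [Matrix.mulVec_add, Matrix.mulVec_smul, dotProduct_add, add_dotProduct,
    add_dotProduct, dotProduct_smul, smul_dotProduct,
    smul_dotProduct, dotProduct_smul, he (A *ᵥ w), h2]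
  simp only [smul_eq_mul]
  ring

lemma gaussDensity_pos' {D : ℕ} {S : Matrix (Fin D) (Fin D) ℝ} (hS : S.PosDef)
    (m x : Fin D → ℝ) : 0 < gaussDensity S m x := by
  apply mul_pos
  · exact Real.rpow_pos_of_pos (mul_pos (pow_pos (by positivity) D) hS.det_pos) _
  · exact Real.exp_pos _

lemma hasDerivAt_quad' {D : ℕ} (A : Matrix (Fin D) (Fin D) ℝ) (x m : Fin D → ℝ) (i : Fin D) :
    HasDerivAt (fun t => (Function.update x i t - m) ⬝ᵥ A.mulVec (Function.update x i t - m))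
      ((A.mulVec (x - m)) i + (Aᵀ.mulVec (x - m)) i) (x i) := by
  have hfun : (fun t => (Function.update x i t - m) ⬝ᵥ A.mulVec (Function.update x i t - m))
      = fun t => ((x - m) ⬝ᵥ A.mulVec (x - m))
        + (t - x i) * ((A.mulVec (x - m)) i + (Aᵀ.mulVec (x - m)) i)
        + (t - x i) ^ 2 * ((Pi.single i 1 : Fin D → ℝ) ⬝ᵥ A.mulVec (Pi.single i 1)) := by
    funext t; exact quad_eq' A x m i t
  rw [hfun]
  set B := (A.mulVec (x - m)) i + (Aᵀ.mulVec (x - m)) i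
  set C := (Pi.single i 1 : Fin D → ℝ) ⬝ᵥ A.mulVec (Pi.single i 1)
  have h1 : HasDerivAt (fun t : ℝ => t - x i) 1 (x i) := (hasDerivAt_id (x i)).sub_const (x i)
  have h2 := ((h1.mul_const B).const_add ((x - m) ⬝ᵥ A.mulVec (x - m))).add
    ((h1.pow 2).mul_const C)
  refine HasDerivAt.congr_deriv h2 ?_
  simp

lemma hasDerivAt_gauss' {D : ℕ} {S : Matrix (Fin D) (Fin D) ℝ} (hsym : S⁻¹ᵀ = S⁻¹)
    (m x : Fin D → ℝ) (i : Fin D) :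
    HasDerivAt (fun t => gaussDensity S m (Function.update x i t))
      (gaussDensity S m x * (S⁻¹.mulVec (m - x)) i) (x i) := by
  have hQ := hasDerivAt_quad' S⁻¹ x m i
  have h := (((hQ.neg).div_const 2).exp).const_mul (((2 * Real.pi) ^ D * S.det) ^ (-(1/2) : ℝ))
  refine HasDerivAt.congr_deriv h ?_
  symm
  rw [hsym]
  unfold gaussDensity
  have hneg : S⁻¹ *ᵥ (m - x) = -(S⁻¹ *ᵥ (x - m)) := by
    rw [show m - x = -(x - m) by ring, Matrix.mulVec_neg]
  rw [hneg]
  simp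
  ring

lemma inv_symm_of_posDef {D : ℕ} {S : Matrix (Fin D) (Fin D) ℝ} (hS : S.PosDef) :
    S⁻¹ᵀ = S⁻¹ := by
  rw [Matrix.transpose_nonsing_inv]
  congr 1
  simpa using hS.1.eq

lemma sumG_pos {D M : ℕ} (hM : 1 ≤ M) (μ : Fin M → Fin D → ℝ) (α : ℝ)
    {S : Matrix (Fin D) (Fin D) ℝ} (hS : S.PosDef) (x : Fin D → ℝ) :
    0 < ∑ m', gaussDensity S (α • μ m') x := by
  have : Nonempty (Fin M) := ⟨⟨0, hM⟩⟩
  exact Finset.sum_pos (fun m _ => gaussDensity_pos' hS _ x) Finset.univ_nonempty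

lemma sum_postW {D M : ℕ} (hM : 1 ≤ M) (μ : Fin M → Fin D → ℝ) (α : ℝ)
    {S : Matrix (Fin D) (Fin D) ℝ} (hS : S.PosDef) (x : Fin D → ℝ) :
    ∑ m, postW μ α S m x = 1 := by
  unfold postW
  rw [← Finset.sum_div, div_self (sumG_pos hM μ α hS x).ne']

lemma score_eq {D M : ℕ} (hM : 1 ≤ M) (μ : Fin M → Fin D → ℝ) (α : ℝ)
    {S : Matrix (Fin D) (Fin D) ℝ} (hS : S.PosDef) (x : Fin D → ℝ) (i : Fin D) :
    score μ α S x i = ∑ m, postW μ α S m x * proxyScore α S x (μ m) i := by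
  have hsym := inv_symm_of_posDef hS
  have hG : 0 < ∑ m', gaussDensity S (α • μ m') x := sumG_pos hM μ α hS x
  have hMpos : (0 : ℝ) < (M : ℝ) := by exact_mod_cast Nat.lt_of_lt_of_le Nat.zero_lt_one hM
  have hmarg : HasDerivAt (fun t => marginal μ α S (Function.update x i t))
      ((M : ℝ)⁻¹ * ∑ m, gaussDensity S (α • μ m) x * (S⁻¹.mulVec (α • μ m - x)) i) (x i) := by
    unfold marginal
    exact (HasDerivAt.fun_sum fun m _ => hasDerivAt_gauss' hsym (α • μ m) x i).const_mul _
  have hpos : 0 < marginal μ α S x := mul_pos (inv_pos.2 hMpos) hG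
  have hpos' : marginal μ α S (Function.update x i (x i)) ≠ 0 := by
    rw [Function.update_eq_self]; exact hpos.ne'
  have hlog := hmarg.log hpos'
  simp only [Function.update_eq_self] at hlog
  have : score μ α S x i
      = ((M : ℝ)⁻¹ * ∑ m, gaussDensity S (α • μ m) x * (S⁻¹.mulVec (α • μ m - x)) i)
        / marginal μ α S x := by
    unfold score pderiv'
    exact hlog.deriv
  rw [this]
  unfold marginal postW proxyScore
  rw [mul_div_mul_left _ _ (inv_ne_zero hMpos.ne'), Finset.sum_div]
  refine Finset.sum_congr rfl fun m _ => ?_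
  rw [div_mul_eq_mul_div]

lemma conj_entry {D : ℕ} {A : Matrix (Fin D) (Fin D) ℝ} (hA : Aᵀ = A) (u v : Fin D → ℝ)
    (i j : Fin D) :
    (A * vecMulVec u v * A) i j = (A.mulVec u) i * (A.mulVec v) j := by
  have hsymm : ∀ k l, A k l = A l k := fun k l => by
    conv_lhs => rw [← hA, Matrix.transpose_apply]
  have h1 : ∀ k, (A * vecMulVec u v) i k = (A.mulVec u) i * v k := by
    intro k
    rw [Matrix.mul_apply]
    simp only [Matrix.vecMulVec_apply, Matrix.mulVec, dotProduct]
    rw [Finset.sum_mul]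
    exact Finset.sum_congr rfl fun l _ => by ring
  rw [Matrix.mul_apply]
  simp only [h1]
  rw [show (A.mulVec v) j = ∑ k, v k * A k j by
    simp only [Matrix.mulVec, dotProduct]
    exact Finset.sum_congr rfl fun k _ => by rw [hsymm j k]; ring]
  rw [Finset.mul_sum]
  exact Finset.sum_congr rfl fun k _ => by ring

/-- for a delta-mixture training distribution,
`C(x) = α² S⁻¹ Cov_w(μ)(x) S⁻¹`. -/
theorem proxyCov_delta_mixture {D M : ℕ} (hD : 1 ≤ D) (hM : 1 ≤ M)
    (μ : Fin M → Fin D → ℝ) (α : ℝ) (hα : 0 < α)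
    (S : Matrix (Fin D) (Fin D) ℝ) (hS : S.PosDef) :
    ∀ x : Fin D → ℝ,
      proxyCov μ α S x = α ^ 2 • (S⁻¹ * postCovMu μ α S x * S⁻¹) := by
  intro x
  ext i j
  have hsym := inv_symm_of_posDef hS
  have hW := sum_postW hM μ α hS x
  set A := S⁻¹ with hAdef
  set w : Fin M → ℝ := fun m => postW μ α S m x with hw
  set c : Fin M → Fin D → ℝ := fun m => A.mulVec (μ m) with hc
  set b : Fin D → ℝ := A.mulVec x with hb
  have hproxy : ∀ m (k : Fin D), proxyScore α S x (μ m) k = α * c m k - b k := by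
    intro m k
    unfold proxyScore
    rw [show α • μ m - x = α • μ m + (-1 : ℝ) • x by funext l; simp; ring,
      Matrix.mulVec_add, Matrix.mulVec_smul, Matrix.mulVec_smul]
    simp [hc, hb]
    ring
  have hscore : ∀ k : Fin D, score μ α S x k = ∑ m, w m * (α * c m k - b k) := by
    intro k
    rw [score_eq hM μ α hS x k]
    exact Finset.sum_congr rfl fun m _ => by rw [hproxy]
  have hscore' : ∀ k : Fin D, score μ α S x k = α * (∑ m, w m * c m k) - b k := by
    intro k
    rw [hscore k]
    calc ∑ m, w m * (α * c m k - b k)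
        = α * (∑ m, w m * c m k) - (∑ m, w m) * b k := by
          rw [Finset.mul_sum, Finset.sum_mul, ← Finset.sum_sub_distrib]
          exact Finset.sum_congr rfl fun m _ => by ring
      _ = α * (∑ m, w m * c m k) - b k := by rw [hW, one_mul]
  -- RHS entry computation
  have hmean : A.mulVec (postMean μ α S x) = ∑ m, w m • c m := by
    unfold postMean
    rw [show A *ᵥ (∑ m, postW μ α S m x • μ m) = ∑ m, A *ᵥ (postW μ α S m x • μ m) from
      map_sum A.mulVecLin _ Finset.univ]
    exact Finset.sum_congr rfl fun m _ => by rw [Matrix.mulVec_smul]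
  have hRHS : (α ^ 2 • (S⁻¹ * postCovMu μ α S x * S⁻¹)) i j
      = α ^ 2 * ((∑ m, w m * (c m i * c m j))
          - (∑ m, w m * c m i) * (∑ m, w m * c m j)) := by
    rw [Matrix.smul_apply, smul_eq_mul]
    congr 1
    unfold postCovMu
    rw [Matrix.mul_sub, Matrix.sub_mul, Matrix.sub_apply]
    congr 1
    · rw [Matrix.mul_sum, Matrix.sum_mul]
      simp only [Matrix.sum_apply]
      refine Finset.sum_congr rfl fun m _ => ?_
      rw [Matrix.mul_smul, Matrix.smul_mul, Matrix.smul_apply, smul_eq_mul,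
        conj_entry hsym]
    · rw [conj_entry hsym, hmean]
      have h1 : ∀ k : Fin D, (∑ m, w m • c m) k = ∑ m, w m * c m k := by
        intro k; rw [Finset.sum_apply]; rfl
      rw [h1, h1]
  rw [hRHS]
  show (∑ m, postW μ α S m x * (proxyScore α S x (μ m) i * proxyScore α S x (μ m) j))
      - score μ α S x i * score μ α S x j = _
  simp only [hproxy, hscore']
  have hexp : (∑ m, w m * ((α * c m i - b i) * (α * c m j - b j)))
      = α ^ 2 * (∑ m, w m * (c m i * c m j))
        - α * b j * (∑ m, w m * c m i) - α * b i * (∑ m, w m * c m j)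
        + (∑ m, w m) * (b i * b j) := by
    rw [Finset.mul_sum, Finset.mul_sum, Finset.mul_sum, Finset.sum_mul,
      ← Finset.sum_sub_distrib, ← Finset.sum_sub_distrib, ← Finset.sum_add_distrib]
    exact Finset.sum_congr rfl fun m _ => by ring
  rw [hexp, hW]
  ring
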